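/- arXiv:1909.06460 — 8 statements merged into one kernel-verified Lean document; each statement's English description precedes it below -/
import Mathlib

section
/- Let q : ℝ → ℝ be continuous on [0,1], let b_i ≠ b_j be real numbers, and for k ∈ {i,j} let u_k : ℝ → ℝ be twice continuously differentiable on [0,1] and satisfy -u_k''(x) + q(x)u_k(x) + b_k u_k(x) = 0 for all x ∈ (0,1), with u_k'(0) = -1 and u_k'(1) = 0. Then ∫₀¹ u_i'(x)u_j'(x) dx + ∫₀¹ q(x)u_i(x)u_j(x) dx = (b_j u_j(0) - b_i u_i(0)) / (b_j - b_i). -/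
open intervalIntegral

/-!
Testing the equation `-u'' + q u + b u = 0` against `v` and integrating by parts gives
`∫ v'u' + ∫ q v u + b ∫ v u = v(1) u'(1) - v(0) u'(0)`, which the Neumann data turn into `v(0)`.
Doing this for `(v, u) = (u_i, u_j)` and for `(u_j, u_i)` gives two linear equations in the
symmetric quantities `∫ u_i'u_j' + ∫ q u_i u_j` and `∫ u_i u_j`; eliminating the latter, which
is possible because `b_i ≠ b_j`, yields the formula.
-/

theorem green_first_identity_of_ode {a b c : ℝ} {q u u' u'' v v' : ℝ → ℝ}
    (hq : ContinuousOn q (Set.uIcc a b))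
    (hv : ∀ x ∈ Set.uIcc a b, HasDerivWithinAt v (v' x) (Set.uIcc a b) x)
    (hv' : ContinuousOn v' (Set.uIcc a b))
    (hu : ∀ x ∈ Set.uIcc a b, HasDerivWithinAt u (u' x) (Set.uIcc a b) x)
    (hu' : ∀ x ∈ Set.uIcc a b, HasDerivWithinAt u' (u'' x) (Set.uIcc a b) x)
    (hu'' : ContinuousOn u'' (Set.uIcc a b))
    (hode : ∀ x ∈ Set.uIoo a b, -u'' x + q x * u x + c * u x = 0) :
    (∫ x in a..b, v' x * u' x) + (∫ x in a..b, q x * v x * u x) + c * ∫ x in a..b, v x * u x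
      = v b * u' b - v a * u' a := by
  have hcv : ContinuousOn v (Set.uIcc a b) := fun x hx ↦ (hv x hx).continuousWithinAt
  have hcu : ContinuousOn u (Set.uIcc a b) := fun x hx ↦ (hu x hx).continuousWithinAt
  have hsecond : ∫ x in a..b, v x * u'' x
      = (∫ x in a..b, q x * v x * u x) + c * ∫ x in a..b, v x * u x := by
    rw [← integral_const_mul, ← integral_add (f := fun x ↦ q x * v x * u x)
      (g := fun x ↦ c * (v x * u x)) ((hq.mul hcv).mul hcu).intervalIntegrable
      ((hcv.mul hcu).intervalIntegrable.const_mul c)]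
    refine integral_congr_uIoo fun x hx ↦ ?_
    linear_combination (-v x) * hode x hx
  have hparts := integral_mul_deriv_eq_deriv_mul_of_hasDerivWithinAt hv hu'
    hv'.intervalIntegrable hu''.intervalIntegrable
  linear_combination hparts - hsecond

/-- Loewner formula for the stiffness matrix entry: for exact solutions at
distinct spectral values `b_i ≠ b_j`,
`∫₀¹ u_i' u_j' + ∫₀¹ q u_i u_j = (b_j u_j(0) - b_i u_i(0)) / (b_j - b_i)`. -/
theorem loewner_stiffness_matrix_entry
    (q uI uI' uI'' uJ uJ' uJ'' : ℝ → ℝ) (bI bJ : ℝ)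
    (hb : bI ≠ bJ)
    (hq : ContinuousOn q (Set.Icc 0 1))
    (huI' : ∀ x ∈ Set.Icc (0:ℝ) 1, HasDerivWithinAt uI (uI' x) (Set.Icc 0 1) x)
    (huI'' : ∀ x ∈ Set.Icc (0:ℝ) 1, HasDerivWithinAt uI' (uI'' x) (Set.Icc 0 1) x)
    (huIc : ContinuousOn uI'' (Set.Icc 0 1))
    (huJ' : ∀ x ∈ Set.Icc (0:ℝ) 1, HasDerivWithinAt uJ (uJ' x) (Set.Icc 0 1) x)
    (huJ'' : ∀ x ∈ Set.Icc (0:ℝ) 1, HasDerivWithinAt uJ' (uJ'' x) (Set.Icc 0 1) x)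
    (huJc : ContinuousOn uJ'' (Set.Icc 0 1))
    (hodeI : ∀ x ∈ Set.Ioo (0:ℝ) 1, -uI'' x + q x * uI x + bI * uI x = 0)
    (hodeJ : ∀ x ∈ Set.Ioo (0:ℝ) 1, -uJ'' x + q x * uJ x + bJ * uJ x = 0)
    (hI0 : uI' 0 = -1) (hI1 : uI' 1 = 0)
    (hJ0 : uJ' 0 = -1) (hJ1 : uJ' 1 = 0) :
    (∫ x in (0:ℝ)..1, uI' x * uJ' x) + (∫ x in (0:ℝ)..1, q x * uI x * uJ x)
      = (bJ * uJ 0 - bI * uI 0) / (bJ - bI) := by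
  have hIcc : Set.uIcc (0:ℝ) 1 = Set.Icc 0 1 := Set.uIcc_of_le zero_le_one
  have hIoo : Set.uIoo (0:ℝ) 1 = Set.Ioo 0 1 := Set.uIoo_of_le zero_le_one
  rw [← hIcc] at hq huI' huI'' huIc huJ' huJ'' huJc
  rw [← hIoo] at hodeI hodeJ
  have hcI' : ContinuousOn uI' (Set.uIcc 0 1) := fun x hx ↦ (huI'' x hx).continuousWithinAt
  have hcJ' : ContinuousOn uJ' (Set.uIcc 0 1) := fun x hx ↦ (huJ'' x hx).continuousWithinAt
  have hIJ := green_first_identity_of_ode hq huI' hcI' huJ' huJ'' huJc hodeJ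
  have hJI := green_first_identity_of_ode hq huJ' hcJ' huI' huI'' huIc hodeI
  simp only [mul_comm (uJ' _) (uI' _), mul_right_comm (q _) (uJ _) (uI _),
    mul_comm (uJ _) (uI _)] at hJI
  rw [hI0, hI1] at hJI
  rw [hJ0, hJ1] at hIJ
  rw [eq_div_iff (sub_ne_zero.mpr hb.symm)]
  linear_combination bJ * hJI - bI * hIJ
end

section
/- Let q : ℝ → ℝ be continuous on [0,1], let I ⊆ ℝ be an open interval, and for each λ ∈ I let u(·,λ) : ℝ → ℝ be twice continuously differentiable on [0,1] and satisfy -∂ₓ²u(x,λ) + q(x)u(x,λ) + λu(x,λ) = 0 for all x ∈ (0,1), with ∂ₓu(0,λ) = -1 and ∂ₓu(1,λ) = 0. Fix b ∈ I and assume that ∫₀¹ u(x,z)u(x,b) dx tends to ∫₀¹ u(x,b)² dx as z → b in I. Then the map λ ↦ u(0,λ) is differentiable at b, with derivative equal to -∫₀¹ u(x,b)² dx. -/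
open Set Filter


/-- If `u(·,λ)` solves the 1D Neumann Schrödinger problem for every `λ` in the
open interval `(a,c)`, and `∫₀¹ u(x,z)u(x,b) dx → ∫₀¹ u(x,b)² dx` as `z → b` in `(a,c)`,
then `λ ↦ u(0,λ)` is differentiable at `b ∈ (a,c)` with derivative `-∫₀¹ u(x,b)² dx`. -/
theorem transfer_function_deriv_eq_neg_mass
    (q : ℝ → ℝ) (u u' u'' : ℝ → ℝ → ℝ) (a c b : ℝ)
    (hq : ContinuousOn q (Set.Icc 0 1))
    (hb : b ∈ Set.Ioo a c)
    (hu' : ∀ l ∈ Set.Ioo a c, ∀ x ∈ Set.Icc (0:ℝ) 1,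
      HasDerivWithinAt (fun t => u t l) (u' x l) (Set.Icc 0 1) x)
    (hu'' : ∀ l ∈ Set.Ioo a c, ∀ x ∈ Set.Icc (0:ℝ) 1,
      HasDerivWithinAt (fun t => u' t l) (u'' x l) (Set.Icc 0 1) x)
    (hucont : ∀ l ∈ Set.Ioo a c, ContinuousOn (fun x => u'' x l) (Set.Icc 0 1))
    (hode : ∀ l ∈ Set.Ioo a c, ∀ x ∈ Set.Ioo (0:ℝ) 1,
      -u'' x l + q x * u x l + l * u x l = 0)
    (hbc0 : ∀ l ∈ Set.Ioo a c, u' 0 l = -1)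
    (hbc1 : ∀ l ∈ Set.Ioo a c, u' 1 l = 0)
    (hlim : Filter.Tendsto (fun z => ∫ x in (0:ℝ)..1, u x z * u x b)
      (nhdsWithin b (Set.Ioo a c)) (nhds (∫ x in (0:ℝ)..1, (u x b) ^ 2))) :
    HasDerivAt (fun l => u 0 l) (-(∫ x in (0:ℝ)..1, (u x b) ^ 2)) b := by
  have hIoo : Set.Ioo a c ∈ nhds b := Ioo_mem_nhds hb.1 hb.2
  have hucontOn : ∀ l ∈ Set.Ioo a c, ContinuousOn (fun x => u x l) (Set.Icc 0 1) :=
    fun l hl x hx => (hu' l hl x hx).continuousWithinAt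
  have hu'contOn : ∀ l ∈ Set.Ioo a c, ContinuousOn (fun x => u' x l) (Set.Icc 0 1) :=
    fun l hl x hx => (hu'' l hl x hx).continuousWithinAt
  -- Key identity from Green/Wronskian computation
  have key : ∀ z ∈ Set.Ioo a c,
      u 0 z - u 0 b = -((z - b) * ∫ x in (0:ℝ)..1, u x z * u x b) := by
    intro z hz
    set W : ℝ → ℝ := fun x => u' x z * u x b - u x z * u' x b with hWdef
    have hWc : ContinuousOn W (Set.Icc 0 1) :=
      ((hu'contOn z hz).mul (hucontOn b hb)).sub ((hucontOn z hz).mul (hu'contOn b hb))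
    have hWd : ∀ x ∈ Set.Ioo (0:ℝ) 1,
        HasDerivAt W ((z - b) * (u x z * u x b)) x := by
      intro x hx
      have hxI : Set.Icc (0:ℝ) 1 ∈ nhds x := Icc_mem_nhds hx.1 hx.2
      have hxIcc : x ∈ Set.Icc (0:ℝ) 1 := Set.Ioo_subset_Icc_self hx
      have huz : HasDerivAt (fun t => u t z) (u' x z) x :=
        (hu' z hz x hxIcc).hasDerivAt hxI
      have hub : HasDerivAt (fun t => u t b) (u' x b) x :=
        (hu' b hb x hxIcc).hasDerivAt hxI
      have hu'z : HasDerivAt (fun t => u' t z) (u'' x z) x :=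
        (hu'' z hz x hxIcc).hasDerivAt hxI
      have hu'b : HasDerivAt (fun t => u' t b) (u'' x b) x :=
        (hu'' b hb x hxIcc).hasDerivAt hxI
      have hW' : HasDerivAt W
          ((u'' x z * u x b + u' x z * u' x b) - (u' x z * u' x b + u x z * u'' x b)) x :=
        (hu'z.mul hub).sub (huz.mul hu'b)
      have hz2 : u'' x z = q x * u x z + z * u x z := by
        have := hode z hz x hx; linarith
      have hb2 : u'' x b = q x * u x b + b * u x b := by
        have := hode b hb x hx; linarith
      convert hW' using 1
      rw [hz2, hb2]; ring
    have hint : IntervalIntegrable (fun x => (z - b) * (u x z * u x b))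
        MeasureTheory.volume 0 1 := by
      apply ContinuousOn.intervalIntegrable
      rw [Set.uIcc_of_le (by norm_num : (0:ℝ) ≤ 1)]
      exact (continuousOn_const.mul ((hucontOn z hz).mul (hucontOn b hb)))
    have hFTC := intervalIntegral.integral_eq_sub_of_hasDeriv_right_of_le
      (by norm_num : (0:ℝ) ≤ 1) hWc
      (fun x hx => (hWd x hx).hasDerivWithinAt) hint
    have hW1 : W 1 = 0 := by simp [hWdef, hbc1 z hz, hbc1 b hb]
    have hW0 : W 0 = u 0 z - u 0 b := by
      simp [hWdef, hbc0 z hz, hbc0 b hb]; ring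
    rw [intervalIntegral.integral_const_mul, hW1, hW0] at hFTC
    linarith
  -- Pass to the limit
  rw [hasDerivAt_iff_tendsto_slope]
  have hnhds : nhdsWithin b (Set.Ioo a c) = nhds b := nhdsWithin_eq_nhds.mpr hIoo
  have hlim' : Filter.Tendsto (fun z => -∫ x in (0:ℝ)..1, u x z * u x b)
      (nhdsWithin b {b}ᶜ) (nhds (-(∫ x in (0:ℝ)..1, (u x b) ^ 2))) := by
    exact ((hlim.mono_left (by rw [hnhds]; exact nhdsWithin_le_nhds)).neg)
  refine hlim'.congr' ?_
  filter_upwards [self_mem_nhdsWithin, nhdsWithin_le_nhds hIoo] with z hzne hzI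
  have hzb : z - b ≠ 0 := sub_ne_zero.mpr hzne
  have := key z hzI
  rw [slope_def_field]
  field_simp [div_eq_iff hzb]
  rw [this]; ring
end

section
/- Let q : ℝ → ℝ be continuous on [0,1], let I ⊆ ℝ be an open interval, and for each λ ∈ I let u(·,λ) : ℝ → ℝ be twice continuously differentiable on [0,1] and satisfy -∂ₓ²u(x,λ) + q(x)u(x,λ) + λu(x,λ) = 0 for all x ∈ (0,1), with ∂ₓu(0,λ) = -1 and ∂ₓu(1,λ) = 0. Fix b ∈ I and assume that ∫₀¹ u(x,z)u(x,b) dx tends to ∫₀¹ u(x,b)² dx as z → b in I. Then the map λ ↦ λ·u(0,λ) is differentiable at b, with derivative equal to ∫₀¹ (∂ₓu(x,b))² dx + ∫₀¹ q(x)u(x,b)² dx. -/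
/-!
Testing the equation `-v'' + q v + z v = 0` against a `C¹` function `w` and integrating by parts
gives the weak form `∫ v' w' + ∫ q v w + z ∫ v w = w(0)`, the boundary term `[v' w]₀¹` reducing
to `w(0)` by the Neumann data. Testing the solution at `z` against the one at `b` and vice
versa and subtracting yields `u(0,b) - u(0,z) = (z - b) ∫ u(·,z) u(·,b)`, so the difference
quotient of `λ ↦ λ u(0,λ)` at `b` equals `u(0,b) - z ∫ u(·,z) u(·,b)`. Its limit
`u(0,b) - b ∫ u(·,b)²` is, by the weak form tested against `u(·,b)` itself, the stiffness form.
-/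

open Set Filter Topology intervalIntegral

theorem integral_eq_sub_of_hasDerivWithinAt_Icc {f f' : ℝ → ℝ} {a b : ℝ} (hab : a ≤ b)
    (hf : ∀ x ∈ Icc a b, HasDerivWithinAt f (f' x) (Icc a b) x)
    (hf' : ContinuousOn f' (Icc a b)) :
    ∫ x in a..b, f' x = f b - f a :=
  integral_eq_sub_of_hasDerivAt_of_le hab (fun x hx => (hf x hx).continuousWithinAt)
    (fun x hx => (hf x (Ioo_subset_Icc_self hx)).hasDerivAt (Icc_mem_nhds hx.1 hx.2))
    (hf'.intervalIntegrable_of_Icc hab)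

theorem hasDerivAt_of_eventually_sub_eq_mul {f g : ℝ → ℝ} {b L : ℝ}
    (hfg : ∀ᶠ z in 𝓝 b, f z - f b = (z - b) * g z) (hg : Tendsto g (𝓝[≠] b) (𝓝 L)) :
    HasDerivAt f L b := by
  rw [hasDerivAt_iff_tendsto_slope]
  refine hg.congr' ?_
  filter_upwards [nhdsWithin_le_nhds hfg, self_mem_nhdsWithin] with z hz hzb
  rw [slope_def_field, hz, mul_div_cancel_left₀ _ (sub_ne_zero.mpr hzb)]

structure IsNeumannSolution (q : ℝ → ℝ) (z : ℝ) (v v' v'' : ℝ → ℝ) : Prop where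
  hasDerivWithinAt : ∀ x ∈ Icc (0:ℝ) 1, HasDerivWithinAt v (v' x) (Icc 0 1) x
  hasDerivWithinAt_deriv : ∀ x ∈ Icc (0:ℝ) 1, HasDerivWithinAt v' (v'' x) (Icc 0 1) x
  continuousOn_deriv2 : ContinuousOn v'' (Icc 0 1)
  ode : ∀ x ∈ Ioo (0:ℝ) 1, -v'' x + q x * v x + z * v x = 0
  deriv_zero : v' 0 = -1
  deriv_one : v' 1 = 0

namespace IsNeumannSolution

variable {q : ℝ → ℝ} {z : ℝ} {v v' v'' : ℝ → ℝ}

theorem continuousOn (hv : IsNeumannSolution q z v v' v'') : ContinuousOn v (Icc 0 1) :=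
  fun x hx => (hv.hasDerivWithinAt x hx).continuousWithinAt

theorem continuousOn_deriv (hv : IsNeumannSolution q z v v' v'') : ContinuousOn v' (Icc 0 1) :=
  fun x hx => (hv.hasDerivWithinAt_deriv x hx).continuousWithinAt

theorem weak_form (hq : ContinuousOn q (Icc 0 1)) (hv : IsNeumannSolution q z v v' v'')
    {w w' : ℝ → ℝ} (hw : ∀ x ∈ Icc (0:ℝ) 1, HasDerivWithinAt w (w' x) (Icc 0 1) x)
    (hw' : ContinuousOn w' (Icc 0 1)) :
    (∫ x in (0:ℝ)..1, v' x * w' x) + (∫ x in (0:ℝ)..1, q x * v x * w x)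
      + z * ∫ x in (0:ℝ)..1, v x * w x = w 0 := by
  have hvc := hv.continuousOn
  have hv'c := hv.continuousOn_deriv
  have hv''c := hv.continuousOn_deriv2
  have hwc : ContinuousOn w (Icc 0 1) := fun x hx => (hw x hx).continuousWithinAt
  have hparts : ∫ x in (0:ℝ)..1, (v'' x * w x + v' x * w' x) = w 0 := by
    rw [integral_eq_sub_of_hasDerivWithinAt_Icc (f := fun x => v' x * w x) zero_le_one
      (fun x hx => (hv.hasDerivWithinAt_deriv x hx).mul (hw x hx)) (by fun_prop),
      hv.deriv_zero, hv.deriv_one]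
    ring
  have hode : EqOn (fun x => v'' x * w x + v' x * w' x)
      (fun x => v' x * w' x + q x * v x * w x + z * (v x * w x)) (Ioo 0 1) := fun x hx => by
    have hv'' : v'' x = q x * v x + z * v x := by linarith [hv.ode x hx]
    simp only [hv'']
    ring
  have hint {f : ℝ → ℝ} (hf : ContinuousOn f (Icc 0 1)) :
      IntervalIntegrable f MeasureTheory.volume 0 1 :=
    hf.intervalIntegrable_of_Icc zero_le_one
  rwa [integral_congr_Ioo_of_le zero_le_one hode, integral_add (hint (by fun_prop))
    (hint (by fun_prop)), integral_add (hint (by fun_prop)) (hint (by fun_prop)),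
    integral_const_mul] at hparts

variable {b : ℝ} {w w' w'' : ℝ → ℝ}

theorem sub_eq_mul_integral (hq : ContinuousOn q (Icc 0 1)) (hv : IsNeumannSolution q z v v' v'')
    (hw : IsNeumannSolution q b w w' w'') :
    w 0 - v 0 = (z - b) * ∫ x in (0:ℝ)..1, v x * w x := by
  have hvw := hv.weak_form hq hw.hasDerivWithinAt hw.continuousOn_deriv
  have hwv := hw.weak_form hq hv.hasDerivWithinAt hv.continuousOn_deriv
  simp only [mul_comm (w' _), mul_comm (w _), mul_right_comm (q _) (w _)] at hwv
  linear_combination hwv - hvw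

theorem stiffness (hq : ContinuousOn q (Icc 0 1)) (hv : IsNeumannSolution q z v v' v'') :
    (∫ x in (0:ℝ)..1, v' x ^ 2) + ∫ x in (0:ℝ)..1, q x * v x ^ 2
      = v 0 - z * ∫ x in (0:ℝ)..1, v x ^ 2 := by
  have h := hv.weak_form hq hv.hasDerivWithinAt hv.continuousOn_deriv
  simp only [sq, ← mul_assoc]
  linear_combination h

end IsNeumannSolution

/-- If `u(·,λ)` solves the 1D Neumann Schrödinger problem for every `λ` in the
open interval `(a,c)`, and `∫₀¹ u(x,z)u(x,b) dx → ∫₀¹ u(x,b)² dx` as `z → b` in `(a,c)`,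
then `λ ↦ λ·u(0,λ)` is differentiable at `b ∈ (a,c)` with derivative
`∫₀¹ (∂ₓu(x,b))² dx + ∫₀¹ q(x)u(x,b)² dx`. -/
theorem lambda_transfer_function_deriv_eq_stiffness
    (q : ℝ → ℝ) (u u' u'' : ℝ → ℝ → ℝ) (a c b : ℝ)
    (hq : ContinuousOn q (Set.Icc 0 1))
    (hb : b ∈ Set.Ioo a c)
    (hu' : ∀ l ∈ Set.Ioo a c, ∀ x ∈ Set.Icc (0:ℝ) 1,
      HasDerivWithinAt (fun t => u t l) (u' x l) (Set.Icc 0 1) x)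
    (hu'' : ∀ l ∈ Set.Ioo a c, ∀ x ∈ Set.Icc (0:ℝ) 1,
      HasDerivWithinAt (fun t => u' t l) (u'' x l) (Set.Icc 0 1) x)
    (hucont : ∀ l ∈ Set.Ioo a c, ContinuousOn (fun x => u'' x l) (Set.Icc 0 1))
    (hode : ∀ l ∈ Set.Ioo a c, ∀ x ∈ Set.Ioo (0:ℝ) 1,
      -u'' x l + q x * u x l + l * u x l = 0)
    (hbc0 : ∀ l ∈ Set.Ioo a c, u' 0 l = -1)
    (hbc1 : ∀ l ∈ Set.Ioo a c, u' 1 l = 0)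
    (hlim : Filter.Tendsto (fun z => ∫ x in (0:ℝ)..1, u x z * u x b)
      (nhdsWithin b (Set.Ioo a c)) (nhds (∫ x in (0:ℝ)..1, (u x b) ^ 2))) :
    HasDerivAt (fun l => l * u 0 l)
      ((∫ x in (0:ℝ)..1, (u' x b) ^ 2) + ∫ x in (0:ℝ)..1, q x * (u x b) ^ 2) b := by
  have hsol : ∀ l ∈ Ioo a c, IsNeumannSolution q l (u · l) (u' · l) (u'' · l) := fun l hl =>
    ⟨hu' l hl, hu'' l hl, hucont l hl, hode l hl, hbc0 l hl, hbc1 l hl⟩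
  have hnhds : Ioo a c ∈ 𝓝 b := Ioo_mem_nhds hb.1 hb.2
  rw [(hsol b hb).stiffness hq]
  refine hasDerivAt_of_eventually_sub_eq_mul
    (g := fun z => u 0 b - z * ∫ x in (0:ℝ)..1, u x z * u x b) ?_ ?_
  · filter_upwards [hnhds] with z hz
    linear_combination -z * (hsol z hz).sub_eq_mul_integral hq (hsol b hb)
  · rw [nhdsWithin_eq_nhds.mpr hnhds] at hlim
    exact (tendsto_const_nhds.sub (tendsto_id.mul hlim)).mono_left nhdsWithin_le_nhds
end

section
/- Let H be a real inner product space, let a : H × H → ℝ be a symmetric bilinear form, let ℓ, k : H → ℝ be linear functionals, and let b ≠ c be real numbers. Suppose u, v ∈ H satisfy a(u,φ) + b⟨u,φ⟩ = ℓ(φ) for all φ ∈ H, and a(v,φ) + c⟨v,φ⟩ = k(φ) for all φ ∈ H. Then ⟨u,v⟩ = (ℓ(v) - k(u)) / (b - c). -/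
open scoped RealInnerProductSpace

/-- Loewner identity for mass matrix entries: if `u`, `v` solve the variational
problems at spectral values `b ≠ c` with sources `ℓ`, `k`, then
`⟨u,v⟩ = (ℓ(v) - k(u)) / (b - c)`. -/
theorem loewner_mass_identity
    {H : Type*} [NormedAddCommGroup H] [InnerProductSpace ℝ H]
    (a : H →ₗ[ℝ] H →ₗ[ℝ] ℝ) (hsym : ∀ x y : H, a x y = a y x)
    (l k : H →ₗ[ℝ] ℝ) (b c : ℝ) (hbc : b ≠ c) (u v : H)
    (hu : ∀ φ : H, a u φ + b * ⟪u, φ⟫ = l φ)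
    (hv : ∀ φ : H, a v φ + c * ⟪v, φ⟫ = k φ) :
    ⟪u, v⟫ = (l v - k u) / (b - c) := by
  have h1 := hu v
  have h2 := hv u
  rw [eq_div_iff (sub_ne_zero.mpr hbc)]
  rw [← h1, ← h2, hsym v u, real_inner_comm v u]
  ring
end

section
/- Let H be a real inner product space, let a : H × H → ℝ be a symmetric bilinear form, let ℓ, k : H → ℝ be linear functionals, and let b ≠ c be real numbers. Suppose u, v ∈ H satisfy a(u,φ) + b⟨u,φ⟩ = ℓ(φ) for all φ ∈ H, and a(v,φ) + c⟨v,φ⟩ = k(φ) for all φ ∈ H. Then a(u,v) = (b·k(u) - c·ℓ(v)) / (b - c). -/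
open scoped RealInnerProductSpace

/-- Loewner identity for stiffness matrix entries: if `u`, `v` solve the
variational problems at spectral values `b ≠ c` with sources `ℓ`, `k`, then
`a(u,v) = (b·k(u) - c·ℓ(v)) / (b - c)`. -/
theorem loewner_stiffness_identity
    {H : Type*} [NormedAddCommGroup H] [InnerProductSpace ℝ H]
    (a : H →ₗ[ℝ] H →ₗ[ℝ] ℝ) (hsym : ∀ x y : H, a x y = a y x)
    (l k : H →ₗ[ℝ] ℝ) (b c : ℝ) (hbc : b ≠ c) (u v : H)
    (hu : ∀ φ : H, a u φ + b * ⟪u, φ⟫ = l φ)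
    (hv : ∀ φ : H, a v φ + c * ⟪v, φ⟫ = k φ) :
    a u v = (b * k u - c * l v) / (b - c) := by
  have h1 := hu v
  have h2 := hv u
  rw [hsym v u, real_inner_comm u v] at h2
  have hbc' : b - c ≠ 0 := sub_ne_zero.mpr hbc
  field_simp
  linear_combination b * h2 - c * h1
end

section
/- Let V be an m-dimensional real inner product space, let a : V × V → ℝ be a symmetric bilinear form, and let w₁,…,w_m be an orthonormal basis of V together with real numbers μ₁,…,μ_m such that a(w_i,φ) = -μ_i⟨w_i,φ⟩ for every φ ∈ V and every i. Let ℓ : V → ℝ be a linear functional, let λ be a real number with λ ≠ μ_i for all i, and let u_G ∈ V satisfy a(u_G,φ) + λ⟨u_G,φ⟩ = ℓ(φ) for all φ ∈ V. Then ℓ(u_G) = Σ_{i=1}^m ℓ(w_i)² / (λ - μ_i). -/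
open scoped RealInnerProductSpace

/-!
Testing the resolvent equation `a(u_G, φ) + λ⟪u_G, φ⟫ = ℓ(φ)` against `φ = w_i` and using the
symmetry of `a` together with the eigen-relation gives `(λ - μ_i)⟪w_i, u_G⟫ = ℓ(w_i)`. Expanding
`u_G = Σ_i ⟪w_i, u_G⟫ w_i` in the orthonormal basis and applying `ℓ` yields the pole–residue sum.
-/

theorem OrthonormalBasis.map_eq_sum_inner_smul {ι 𝕜 E M : Type*} [Fintype ι] [RCLike 𝕜]
    [NormedAddCommGroup E] [InnerProductSpace 𝕜 E] [AddCommMonoid M] [Module 𝕜 M]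
    (b : OrthonormalBasis ι 𝕜 E) (f : E →ₗ[𝕜] M) (x : E) :
    f x = ∑ i, inner 𝕜 (b i) x • f (b i) := by
  conv_lhs => rw [← b.sum_repr' x]
  simp only [map_sum, map_smul]

section Resolvent

variable {V : Type*} [NormedAddCommGroup V] [InnerProductSpace ℝ V]
  {a : V →ₗ[ℝ] V →ₗ[ℝ] ℝ} {l : V →ₗ[ℝ] ℝ} {lam μ : ℝ} {u w : V}

theorem sub_mul_inner_eq_of_resolvent (hsym : a u w = a w u)
    (heig : ∀ φ : V, a w φ = -μ * ⟪w, φ⟫) (hu : ∀ φ : V, a u φ + lam * ⟪u, φ⟫ = l φ) :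
    (lam - μ) * ⟪w, u⟫ = l w := by
  have h := hu w
  rw [hsym, heig u, real_inner_comm w u] at h
  linear_combination h

theorem inner_eq_div_of_resolvent (hsym : a u w = a w u)
    (heig : ∀ φ : V, a w φ = -μ * ⟪w, φ⟫) (hlam : lam ≠ μ)
    (hu : ∀ φ : V, a u φ + lam * ⟪u, φ⟫ = l φ) :
    ⟪w, u⟫ = l w / (lam - μ) := by
  rw [eq_div_iff (sub_ne_zero.mpr hlam), mul_comm]
  exact sub_mul_inner_eq_of_resolvent hsym heig hu

end Resolvent

/-- Pole–residue representation of the Galerkin transfer function: if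
`(w_i, μ_i)` are orthonormal Galerkin eigenpairs of the symmetric bilinear form `a`, and
`u_G` solves `a(u_G,φ) + λ⟨u_G,φ⟩ = ℓ(φ)` for all `φ`, with `λ ≠ μ_i` for all `i`, then
`ℓ(u_G) = Σ_i ℓ(w_i)² / (λ - μ_i)`. -/
theorem galerkin_transfer_pole_residue
    {V : Type*} [NormedAddCommGroup V] [InnerProductSpace ℝ V] {m : ℕ}
    (a : V →ₗ[ℝ] V →ₗ[ℝ] ℝ) (hsym : ∀ x y : V, a x y = a y x)
    (w : OrthonormalBasis (Fin m) ℝ V) (μ : Fin m → ℝ)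
    (heig : ∀ i : Fin m, ∀ φ : V, a (w i) φ = -(μ i) * ⟪w i, φ⟫)
    (l : V →ₗ[ℝ] ℝ) (lam : ℝ) (hlam : ∀ i, lam ≠ μ i)
    (uG : V) (hG : ∀ φ : V, a uG φ + lam * ⟪uG, φ⟫ = l φ) :
    l uG = ∑ i : Fin m, (l (w i)) ^ 2 / (lam - μ i) := by
  rw [w.map_eq_sum_inner_smul l uG]
  refine Finset.sum_congr rfl fun i _ => ?_
  rw [inner_eq_div_of_resolvent (hsym uG (w i)) (heig i) (hlam i) hG, smul_eq_mul]
  ring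
end

section
/- Let V be a finite-dimensional real inner product space, let a : V × V → ℝ be a symmetric bilinear form, let ℓ : V → ℝ be a linear functional, and let U ⊆ ℝ be an open set such that for every λ ∈ U the problem a(u,φ) + λ⟨u,φ⟩ = ℓ(φ) for all φ ∈ V has a unique solution u_λ ∈ V. Then the function λ ↦ ℓ(u_λ) is differentiable on U, and its derivative at each λ ∈ U equals -⟨u_λ, u_λ⟩. -/
/-!
Writing `a(x, y) = ⟪T x, y⟫` and `ℓ(y) = ⟪w, y⟫`, the solution `u_λ` is the preimage of `w` under
`T + λ`; uniqueness makes `T + λ` invertible, so `u` is continuous, as the inverse is continuous on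
the open set of units. Testing the equation at `s` against `u_t` and the one at `t` against `u_s`,
symmetry of `a` gives `ℓ(u_t) - ℓ(u_s) = (s - t) ⟪u_s, u_t⟫`, so the difference quotient at `s`
is `-⟪u_s, u_t⟫`, which tends to `-⟪u_s, u_s⟫`.
-/

open Filter Topology
open scoped RealInnerProductSpace

theorem hasDerivAt_of_sub_eq_mul {f g : ℝ → ℝ} {x : ℝ} (hg : ContinuousAt g x)
    (h : ∀ᶠ t in 𝓝 x, f t - f x = (t - x) * g t) : HasDerivAt f (g x) x := by
  rw [hasDerivAt_iff_tendsto_slope]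
  refine hg.tendsto.mono_left nhdsWithin_le_nhds |>.congr' ?_
  filter_upwards [self_mem_nhdsWithin, nhdsWithin_le_nhds h] with t ht hft
  rw [slope_def_field, hft, mul_div_cancel_left₀ _ (sub_ne_zero.mpr ht)]

theorem continuousAt_of_eventually_apply_eq {E : Type*} [NormedAddCommGroup E] [NormedSpace ℝ E]
    [CompleteSpace E] {B : ℝ → E →L[ℝ] E} {u : ℝ → E} {w : E} {x : ℝ} (hB : ContinuousAt B x)
    (hx : IsUnit (B x)) (hu : ∀ᶠ t in 𝓝 x, B t (u t) = w) : ContinuousAt u x := by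
  have hunit : ∀ᶠ t in 𝓝 x, IsUnit (B t) := hB.eventually (Units.isOpen.mem_nhds hx)
  have hinv : ContinuousAt (fun t => Ring.inverse (B t) w) x :=
    ((NormedRing.inverse_continuousAt hx.unit).comp_of_eq hB hx.unit_spec.symm).clm_apply
      continuousAt_const
  refine hinv.congr ?_
  filter_upwards [hunit, hu] with t ht hut
  rw [← hut]
  exact congr($(Ring.inverse_mul_cancel _ ht) (u t))

section InnerProductSpace

variable {V : Type*} [NormedAddCommGroup V] [InnerProductSpace ℝ V]

theorem ContinuousLinearMap.isUnit_of_existsUnique_preimage [FiniteDimensional ℝ V]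
    {B : V →L[ℝ] V} {u w : V} (hu : B u = w) (huniq : ∀ v, B v = w → v = u) : IsUnit B := by
  have hinj : Function.Injective B := fun x y hxy => by
    have : x - y + u = u := huniq _ (by rw [map_add, map_sub, hxy, sub_self, zero_add, hu])
    rwa [add_eq_right, sub_eq_zero] at this
  exact ContinuousLinearMap.isUnit_iff_bijective.mpr
    ⟨hinj, LinearMap.injective_iff_surjective (f := (B : V →ₗ[ℝ] V)) |>.mp hinj⟩

theorem exists_inner_eq_bilin [FiniteDimensional ℝ V] (a : V →ₗ[ℝ] V →ₗ[ℝ] ℝ) :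
    ∃ T : V →L[ℝ] V, ∀ x y, ⟪T x, y⟫ = a x y :=
  ⟨InnerProductSpace.continuousLinearMapOfBilin a.toContinuousBilinearMap, fun x y =>
    (InnerProductSpace.continuousLinearMapOfBilin_apply _ x y).trans rfl⟩

theorem exists_inner_eq_linear [FiniteDimensional ℝ V] (l : V →ₗ[ℝ] ℝ) :
    ∃ w : V, ∀ y, ⟪w, y⟫ = l y :=
  ⟨(InnerProductSpace.toDual ℝ V).symm (LinearMap.toContinuousLinearMap l), fun y => by simp⟩

variable (a : V →ₗ[ℝ] V →ₗ[ℝ] ℝ) (l : V →ₗ[ℝ] ℝ)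

theorem add_smul_one_apply_eq_iff {T : V →L[ℝ] V} {w : V} (hT : ∀ x y, ⟪T x, y⟫ = a x y)
    (hw : ∀ y, ⟪w, y⟫ = l y) (t : ℝ) (v : V) :
    (T + t • 1) v = w ↔ ∀ φ, a v φ + t * ⟪v, φ⟫ = l φ := by
  have hinner : ∀ φ, ⟪(T + t • 1) v, φ⟫ = a v φ + t * ⟪v, φ⟫ := fun φ => by
    simp [inner_add_left, inner_smul_left, hT]
  simp_rw [← hinner, ← hw]
  exact ⟨fun h φ => h ▸ rfl, ext_inner_right ℝ⟩

theorem sub_eq_mul_inner_of_solves (hsym : ∀ x y : V, a x y = a y x) {x y : V} {s t : ℝ}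
    (hx : ∀ φ, a x φ + s * ⟪x, φ⟫ = l φ) (hy : ∀ φ, a y φ + t * ⟪y, φ⟫ = l φ) :
    l y - l x = (s - t) * ⟪x, y⟫ := by
  rw [← hx y, ← hy x, hsym y x, real_inner_comm y x]
  ring

end InnerProductSpace

/-- Derivative of the Galerkin transfer function: if for every `λ` in the open
set `U` the variational problem `a(u,φ) + λ⟨u,φ⟩ = ℓ(φ)` (for all `φ`) has the unique
solution `u λ`, then `λ ↦ ℓ(u_λ)` is differentiable on `U` with derivative `-⟨u_λ, u_λ⟩`. -/
theorem galerkin_transfer_function_derivative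
    {V : Type*} [NormedAddCommGroup V] [InnerProductSpace ℝ V] [FiniteDimensional ℝ V]
    (a : V →ₗ[ℝ] V →ₗ[ℝ] ℝ) (hsym : ∀ x y : V, a x y = a y x)
    (l : V →ₗ[ℝ] ℝ) (U : Set ℝ) (hU : IsOpen U)
    (u : ℝ → V)
    (hsol : ∀ lam ∈ U, ∀ φ : V, a (u lam) φ + lam * ⟪u lam, φ⟫ = l φ)
    (huniq : ∀ lam ∈ U, ∀ v : V, (∀ φ : V, a v φ + lam * ⟪v, φ⟫ = l φ) → v = u lam) :
    ∀ lam ∈ U, HasDerivAt (fun t => l (u t)) (-⟪u lam, u lam⟫) lam := by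
  intro lam hlam
  obtain ⟨T, hT⟩ := exists_inner_eq_bilin a
  obtain ⟨w, hw⟩ := exists_inner_eq_linear l
  have hsolves := add_smul_one_apply_eq_iff a l hT hw
  have hunit : IsUnit (T + lam • 1) :=
    ContinuousLinearMap.isUnit_of_existsUnique_preimage ((hsolves _ _).2 (hsol lam hlam))
      fun v hv => huniq lam hlam v ((hsolves _ _).1 hv)
  have hcont : ContinuousAt u lam :=
    continuousAt_of_eventually_apply_eq (B := fun t => T + t • 1) (by fun_prop) hunit
      (eventually_of_mem (hU.mem_nhds hlam) fun t ht => (hsolves _ _).2 (hsol t ht))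
  refine hasDerivAt_of_sub_eq_mul (g := fun t => -⟪u lam, u t⟫) (by fun_prop) ?_
  filter_upwards [hU.mem_nhds hlam] with t ht
  rw [sub_eq_mul_inner_of_solves a l hsym (hsol lam hlam) (hsol t ht)]
  ring
end

section
/- Let H be a real inner product space, let a : H × H → ℝ be a symmetric bilinear form with a(v,v) ≥ 0 for all v ∈ H, let ℓ : H → ℝ be a linear functional, and let b₁,…,b_m be distinct positive real numbers. For each i, let u_i ∈ H satisfy a(u_i,φ) + b_i⟨u_i,φ⟩ = ℓ(φ) for all φ ∈ H, and suppose u₁,…,u_m are linearly independent with span V. For each λ > 0, let u_G(λ) ∈ V be the unique element with a(u_G(λ),φ) + λ⟨u_G(λ),φ⟩ = ℓ(φ) for all φ ∈ V, and set F_G(λ) := ℓ(u_G(λ)). Then: (i) there exist real numbers θ₁,…,θ_m ≤ 0 and y₁,…,y_m such that F_G(λ) = Σ_{i=1}^m y_i²/(λ - θ_i) for all λ > 0; (ii) F_G(b_i) = ℓ(u_i) for each i; and (iii) F_G is differentiable at each b_i with F_G'(b_i) = -⟨u_i, u_i⟩. -/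
/-!
On the finite-dimensional space `V` spanned by the `u i`, the form `a` is represented by a
symmetric positive semidefinite operator. In an orthonormal eigenbasis `e j` with eigenvalues
`μ j ≥ 0` the Galerkin equation decouples into `(λ + μ j) ⟪e j, u_G(λ)⟫ = ℓ (e j)`, so
`F_G(λ) = ∑ ℓ (e j)² / (λ + μ j)` and `‖u_G(λ)‖² = ∑ ℓ (e j)² / (λ + μ j)²`, which is `-F_G'(λ)`.
Since `u i ∈ V` solves the equation at `b i` (even against all of `H`), and the Galerkin solution
is unique because `a + λ⟪·, ·⟫` is positive definite for `λ > 0`, we get `u_G(b i) = u i`; this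
gives both the interpolation of the values and of the derivatives.
-/

open scoped RealInnerProductSpace
open Topology

section SpectralResolution

variable {E : Type*} [NormedAddCommGroup E] [InnerProductSpace ℝ E]

theorem OrthonormalBasis.inner_eq_div_of_bilin_add_inner_eq {ι : Type*} [Fintype ι]
    {B : E →ₗ[ℝ] E →ₗ[ℝ] ℝ} {ℓ : E →ₗ[ℝ] ℝ} (e : OrthonormalBasis ι ℝ E) {μ : ι → ℝ}
    (he : ∀ v j, B v (e j) = μ j * ⟪v, e j⟫) {lam : ℝ} {w : E}
    (hw : ∀ φ, B w φ + lam * ⟪w, φ⟫ = ℓ φ) {j : ι} (hj : lam + μ j ≠ 0) :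
    ⟪e j, w⟫ = ℓ (e j) / (lam + μ j) := by
  rw [eq_div_iff hj, ← hw, he, real_inner_comm]
  ring

variable [FiniteDimensional ℝ E]

noncomputable def linearMapOfBilin (B : E →ₗ[ℝ] E →ₗ[ℝ] ℝ) : E →ₗ[ℝ] E where
  toFun v := (InnerProductSpace.toDual ℝ E).symm (LinearMap.toContinuousLinearMap (B v))
  map_add' v w := by simp
  map_smul' c v := by simp

theorem inner_linearMapOfBilin (B : E →ₗ[ℝ] E →ₗ[ℝ] ℝ) (v w : E) :
    ⟪linearMapOfBilin B v, w⟫ = B v w := by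
  simp [linearMapOfBilin, InnerProductSpace.toDual_symm_apply]

theorem isSymmetric_linearMapOfBilin {B : E →ₗ[ℝ] E →ₗ[ℝ] ℝ} (hB : ∀ x y, B x y = B y x) :
    (linearMapOfBilin B).IsSymmetric := fun x y => by
  rw [inner_linearMapOfBilin, real_inner_comm, inner_linearMapOfBilin, hB]

theorem exists_orthonormalBasis_bilin_eq_mul_inner {B : E →ₗ[ℝ] E →ₗ[ℝ] ℝ}
    (hB : ∀ x y, B x y = B y x) (hpos : ∀ v, 0 ≤ B v v) {n : ℕ} (hn : Module.finrank ℝ E = n) :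
    ∃ (e : OrthonormalBasis (Fin n) ℝ E) (μ : Fin n → ℝ),
      (∀ j, 0 ≤ μ j) ∧ ∀ v j, B v (e j) = μ j * ⟪v, e j⟫ := by
  have hT := isSymmetric_linearMapOfBilin hB
  have heig (v : E) (j : Fin n) : B v (hT.eigenvectorBasis hn j)
      = hT.eigenvalues hn j * ⟪v, hT.eigenvectorBasis hn j⟫ := by
    rw [← inner_linearMapOfBilin, hT, hT.apply_eigenvectorBasis, real_inner_smul_right]
    rfl
  refine ⟨hT.eigenvectorBasis hn, hT.eigenvalues hn, fun j => ?_, heig⟩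
  simpa [heig, real_inner_self_eq_norm_sq] using hpos (hT.eigenvectorBasis hn j)

theorem exists_spectral_resolution {B : E →ₗ[ℝ] E →ₗ[ℝ] ℝ}
    (hB : ∀ x y, B x y = B y x) (hpos : ∀ v, 0 ≤ B v v) (ℓ : E →ₗ[ℝ] ℝ)
    {n : ℕ} (hn : Module.finrank ℝ E = n) :
    ∃ μ y : Fin n → ℝ, (∀ j, 0 ≤ μ j) ∧ ∀ (lam : ℝ) (w : E), 0 < lam →
      (∀ φ, B w φ + lam * ⟪w, φ⟫ = ℓ φ) →
        ℓ w = ∑ j, y j ^ 2 / (lam + μ j) ∧ ⟪w, w⟫ = ∑ j, y j ^ 2 / (lam + μ j) ^ 2 := by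
  obtain ⟨e, μ, hμ, he⟩ := exists_orthonormalBasis_bilin_eq_mul_inner hB hpos hn
  refine ⟨μ, fun j => ℓ (e j), hμ, fun lam w hlam hw => ?_⟩
  have hcoord (j : Fin n) : ⟪e j, w⟫ = ℓ (e j) / (lam + μ j) :=
    e.inner_eq_div_of_bilin_add_inner_eq he hw (by linarith [hμ j])
  constructor
  · conv_lhs => rw [← e.sum_repr' w]
    simp only [map_sum, map_smul, smul_eq_mul, hcoord]
    congr 1; funext j; ring
  · rw [← e.sum_inner_mul_inner]
    congr 1; funext j
    rw [real_inner_comm (e j) w, hcoord, ← sq, div_pow]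

end SpectralResolution

theorem eq_of_bilin_add_inner_eq {H : Type*} [NormedAddCommGroup H] [InnerProductSpace ℝ H]
    {a : H →ₗ[ℝ] H →ₗ[ℝ] ℝ} (hpos : ∀ v, 0 ≤ a v v) {ℓ : H →ₗ[ℝ] ℝ} {V : Submodule ℝ H}
    {lam : ℝ} (hlam : 0 < lam) {w₁ w₂ : H} (hw : w₁ - w₂ ∈ V)
    (h₁ : ∀ φ ∈ V, a w₁ φ + lam * ⟪w₁, φ⟫ = ℓ φ) (h₂ : ∀ φ ∈ V, a w₂ φ + lam * ⟪w₂, φ⟫ = ℓ φ) :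
    w₁ = w₂ := by
  set d := w₁ - w₂
  have hd : a d d + lam * ⟪d, d⟫ = 0 := by
    have := congr($(h₁ d hw) - $(h₂ d hw))
    simp only [d, map_sub, LinearMap.sub_apply, inner_sub_left] at this ⊢
    linarith
  have hdd : ⟪d, d⟫ = 0 := by
    nlinarith [hpos d, real_inner_self_nonneg (x := d)]
  exact sub_eq_zero.mp (inner_self_eq_zero.mp hdd)

theorem hasDerivAt_sum_sq_div_add {ι : Type*} [Fintype ι] (y μ : ι → ℝ) {x : ℝ}
    (hx : ∀ j, x + μ j ≠ 0) :
    HasDerivAt (fun lam => ∑ j, y j ^ 2 / (lam + μ j)) (-∑ j, y j ^ 2 / (x + μ j) ^ 2) x := by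
  rw [← Finset.sum_neg_distrib]
  refine HasDerivAt.fun_sum fun j _ => ?_
  refine ((hasDerivAt_const x (y j ^ 2)).fun_div ((hasDerivAt_id' x).add_const (μ j))
    (hx j)).congr_deriv ?_
  ring

theorem galerkin_transfer_hermite_interpolation_general
    {H : Type*} [NormedAddCommGroup H] [InnerProductSpace ℝ H]
    (a : H →ₗ[ℝ] H →ₗ[ℝ] ℝ) (hsym : ∀ x y : H, a x y = a y x)
    (hpos : ∀ v : H, 0 ≤ a v v) (l : H →ₗ[ℝ] ℝ)
    {m : ℕ} (b : Fin m → ℝ) (hbpos : ∀ i, 0 < b i)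
    (u : Fin m → H)
    (hsol : ∀ i : Fin m, ∀ φ : H, a (u i) φ + b i * ⟪u i, φ⟫ = l φ)
    (hli : LinearIndependent ℝ u)
    (uG : ℝ → H)
    (huGmem : ∀ lam : ℝ, 0 < lam → uG lam ∈ Submodule.span ℝ (Set.range u))
    (huGsol : ∀ lam : ℝ, 0 < lam → ∀ φ ∈ Submodule.span ℝ (Set.range u),
      a (uG lam) φ + lam * ⟪uG lam, φ⟫ = l φ) :
    (∃ θ y : Fin m → ℝ, (∀ i, θ i ≤ 0) ∧
        ∀ lam : ℝ, 0 < lam → l (uG lam) = ∑ i : Fin m, (y i) ^ 2 / (lam - θ i)) ∧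
      (∀ i : Fin m, l (uG (b i)) = l (u i)) ∧
      (∀ i : Fin m, HasDerivAt (fun lam => l (uG lam)) (-⟪u i, u i⟫) (b i)) := by
  set V := Submodule.span ℝ (Set.range u)
  have : FiniteDimensional ℝ V := FiniteDimensional.span_of_finite ℝ (Set.finite_range u)
  have hn : Module.finrank ℝ V = m := by rw [finrank_span_eq_card hli, Fintype.card_fin]
  obtain ⟨μ, y, hμ, hres⟩ := exists_spectral_resolution (B := a.compl₁₂ V.subtype V.subtype)
    (fun x y => hsym x y) (fun v => hpos v) (l.comp V.subtype) hn
  have hG (lam : ℝ) (hlam : 0 < lam) := hres lam ⟨uG lam, huGmem lam hlam⟩ hlam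
    fun φ => huGsol lam hlam φ φ.2
  have hinterp (i : Fin m) : uG (b i) = u i :=
    eq_of_bilin_add_inner_eq hpos (hbpos i)
      (V.sub_mem (huGmem _ (hbpos i)) (Submodule.subset_span ⟨i, rfl⟩))
      (huGsol _ (hbpos i)) fun φ _ => hsol i φ
  refine ⟨⟨fun j => -μ j, y, fun j => neg_nonpos.mpr (hμ j), fun lam hlam => ?_⟩,
    fun i => by rw [hinterp], fun i => ?_⟩
  · simp only [sub_neg_eq_add]
    exact (hG lam hlam).1
  have hF : (fun lam => l (uG lam)) =ᶠ[𝓝 (b i)] fun lam => ∑ j, y j ^ 2 / (lam + μ j) :=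
    eventually_gt_nhds (hbpos i) |>.mono fun lam hlam => (hG lam hlam).1
  have hN : ⟪u i, u i⟫ = ∑ j, y j ^ 2 / (b i + μ j) ^ 2 := hinterp i ▸ (hG _ (hbpos i)).2
  rw [hN]
  exact (hasDerivAt_sum_sq_div_add y μ fun j => by linarith [hμ j, hbpos i]).congr_of_eventuallyEq
    hF

/-- abstract Lemma 3.1: with a symmetric positive-semidefinite stiffness form
`a`, receiver functional `ℓ`, distinct positive sample values `b_i`, exact solutions `u_i`
spanning the Galerkin space `V`, and `u_G(λ) ∈ V` the (unique) Galerkin solution for each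
`λ > 0`, the Galerkin transfer function `F_G(λ) = ℓ(u_G(λ))` (i) has a pole–residue form
`Σ y_i²/(λ - θ_i)` with `θ_i ≤ 0`, (ii) interpolates `F_G(b_i) = ℓ(u_i)`, and
(iii) is differentiable at each `b_i` with `F_G'(b_i) = -⟨u_i, u_i⟩`. -/
theorem galerkin_transfer_hermite_interpolation
    {H : Type*} [NormedAddCommGroup H] [InnerProductSpace ℝ H]
    (a : H →ₗ[ℝ] H →ₗ[ℝ] ℝ) (hsym : ∀ x y : H, a x y = a y x)
    (hpos : ∀ v : H, 0 ≤ a v v) (l : H →ₗ[ℝ] ℝ)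
    {m : ℕ} (b : Fin m → ℝ) (hbpos : ∀ i, 0 < b i) (hbinj : Function.Injective b)
    (u : Fin m → H)
    (hsol : ∀ i : Fin m, ∀ φ : H, a (u i) φ + b i * ⟪u i, φ⟫ = l φ)
    (hli : LinearIndependent ℝ u)
    (uG : ℝ → H)
    (huGmem : ∀ lam : ℝ, 0 < lam → uG lam ∈ Submodule.span ℝ (Set.range u))
    (huGsol : ∀ lam : ℝ, 0 < lam → ∀ φ ∈ Submodule.span ℝ (Set.range u),
      a (uG lam) φ + lam * ⟪uG lam, φ⟫ = l φ) :
    (∃ θ y : Fin m → ℝ, (∀ i, θ i ≤ 0) ∧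
        ∀ lam : ℝ, 0 < lam → l (uG lam) = ∑ i : Fin m, (y i) ^ 2 / (lam - θ i)) ∧
      (∀ i : Fin m, l (uG (b i)) = l (u i)) ∧
      (∀ i : Fin m, HasDerivAt (fun lam => l (uG lam)) (-⟪u i, u i⟫) (b i)) :=
  galerkin_transfer_hermite_interpolation_general a hsym hpos l b hbpos u hsol hli uG huGmem huGsol
end
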